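/- Let u be the quaternary sequence of length N = 2n generated by Construction I from binary sequences a_0, a_1, a_2, a_3 of odd length n and bits e(0), e(1), e(2). Then for every odd shift τ = 2τ_0 + 1 with 0 ≤ τ_0 < n, setting τ_2 = τ_0 + λ (mod n), R_u(τ) = (−1)^{e(0)}[R_{a_0,a_1}(τ_2) + R_{a_1,a_0}(τ_2) + (−1)^{e(0)+e(1)+e(2)}(R_{a_2,a_3}(τ_2) + R_{a_3,a_2}(τ_2))]/2 + (−1)^{e(2)}[R_{a_0,a_3}(τ_2) − R_{a_3,a_0}(τ_2) + (−1)^{e(0)+e(1)+e(2)}(R_{a_1,a_2}(τ_2) − R_{a_2,a_1}(τ_2))]·ξ/2, where ξ = √−1. -/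

import Mathlib

/-- Cross-correlation of two sequences of length `N` over `ℤ_H`, with `ξ = exp(2πi/H)`. -/
noncomputable def crossCorr (H N : ℕ) (s t : ZMod N → ZMod H) (τ : ZMod N) : ℂ :=
  ∑ i ∈ Finset.range N,
    Complex.exp (2 * (Real.pi : ℂ) * Complex.I / (H : ℂ)) ^ ((s (i : ZMod N) - t ((i : ZMod N) + τ)).val)

/-- Cross-correlation of two binary sequences of length `N` (an integer). -/
def binCorr (N : ℕ) (s t : ZMod N → ZMod 2) (τ : ZMod N) : ℤ :=
  ∑ i ∈ Finset.range N, (-1 : ℤ) ^ ((s (i : ZMod N) + t ((i : ZMod N) + τ)).val)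

/-- Cross-correlation of two quaternary sequences of length `N`, with `ξ = √-1`. -/
noncomputable def quadCorr (N : ℕ) (s t : ZMod N → ZMod 4) (τ : ZMod N) : ℂ :=
  ∑ i ∈ Finset.range N, Complex.I ^ ((s (i : ZMod N) - t ((i : ZMod N) + τ)).val)

/-- Interleaving `u = I(a, b)`: `u(2i) = a(i)`, `u(2i+1) = b(i)`. -/
def interleaveSeq {H : ℕ} (n : ℕ) (a b : ZMod n → ZMod H) : ZMod (2 * n) → ZMod H :=
  fun k => if k.val % 2 = 0 then a ((k.val / 2 : ℕ) : ZMod n) else b ((k.val / 2 : ℕ) : ZMod n)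

/-- The inverse Gray mapping `φ⁻¹ : ℤ₂ × ℤ₂ → ℤ₄`. -/
def grayInv (a b : ZMod 2) : ZMod 4 :=
  if a = 0 then (if b = 0 then 0 else 1) else (if b = 0 then 3 else 2)

/-- Construction I: the quaternary sequence of length `2n` built from
`a₀, a₁, a₂, a₃` and bits `e₀, e₁, e₂`. -/
def constructionI (n : ℕ) (a0 a1 a2 a3 : ZMod n → ZMod 2)
    (e0 e1 e2 : ZMod 2) : ZMod (2 * n) → ZMod 4 :=
  let lam : ZMod n := (((n + 1) / 2 : ℕ) : ZMod n)
  let c := interleaveSeq n a0 (fun i => e0 + a1 (i + lam))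
  let d := interleaveSeq n (fun i => e1 + a2 i) (fun i => e2 + a3 (i + lam))
  fun i => grayInv (c i) (d i)


/-!
Writing `ξ^{φ⁻¹(a,b)} = ((1 + i)(-1)^a + (1 - i)(-1)^b) / 2`, the correlation of two Gray images
splits into binary correlations:
`R_{φ⁻¹(a,b), φ⁻¹(c,d)} = (R_{a,c} + R_{b,d}) / 2 + (R_{a,d} - R_{b,c}) i / 2`.
At an odd shift `2τ₀ + 1` an interleaved sequence `I(p, q)` has correlation
`R_{p,q}(τ₀) + R_{q,p}(τ₀ + 1)`. In Construction I the odd component is shifted by `λ`, and since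
`2λ ≡ 1 (mod n)` both shifts become `τ₂`; the bits `e(k)` come out of the binary correlations as
signs, and `(-1)^{2e} = 1` collects them into the stated form.
-/

open Finset Complex

section Sums

variable {M : Type*} [AddCommMonoid M]

lemma sum_range_two_mul (n : ℕ) (f : ℕ → M) :
    ∑ i ∈ range (2 * n), f i = ∑ i ∈ range n, (f (2 * i) + f (2 * i + 1)) := by
  induction n with
  | zero => simp
  | succ m ih => rw [Nat.mul_succ, sum_range_succ, sum_range_succ, sum_range_succ, ih, add_assoc]

lemma sum_range_natCast_eq_sum_univ (n : ℕ) [NeZero n] (f : ZMod n → M) :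
    ∑ i ∈ range n, f i = ∑ x : ZMod n, f x :=
  Finset.sum_nbij' (fun i => (i : ZMod n)) ZMod.val (fun _ _ => mem_univ _)
    (fun x _ => mem_range.2 x.val_lt) (fun _ hi => ZMod.val_cast_of_lt (mem_range.1 hi))
    (fun x _ => ZMod.natCast_zmod_val x) (fun _ _ => rfl)

end Sums

lemma neg_one_pow_val_add {R : Type*} [Monoid R] [HasDistribNeg R] (x y : ZMod 2) :
    (-1 : R) ^ (x + y).val = (-1) ^ x.val * (-1) ^ y.val := by
  rw [ZMod.val_add, ← pow_eq_pow_mod _ neg_one_sq, pow_add]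

section BinCorr

variable {N : ℕ} (s t : ZMod N → ZMod 2) (τ : ZMod N)

lemma binCorr_const_add_left (e : ZMod 2) :
    binCorr N (fun i => e + s i) t τ = (-1) ^ e.val * binCorr N s t τ := by
  simp only [binCorr, mul_sum, add_assoc, neg_one_pow_val_add e]

lemma binCorr_const_add_right (e : ZMod 2) :
    binCorr N s (fun i => e + t i) τ = (-1) ^ e.val * binCorr N s t τ := by
  simp only [binCorr, mul_sum, add_left_comm _ e, neg_one_pow_val_add e]

lemma binCorr_shift_right (g : ZMod N) :
    binCorr N s (fun i => t (i + g)) τ = binCorr N s t (τ + g) := by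
  simp only [binCorr, add_assoc]

lemma binCorr_shift_left [NeZero N] (g : ZMod N) :
    binCorr N (fun i => s (i + g)) t τ = binCorr N s t (τ - g) := by
  simp only [binCorr]
  rw [sum_range_natCast_eq_sum_univ N (fun x => (-1 : ℤ) ^ (s (x + g) + t (x + τ)).val),
    sum_range_natCast_eq_sum_univ N (fun x => (-1 : ℤ) ^ (s x + t (x + (τ - g))).val),
    Fintype.sum_equiv (Equiv.addRight g) _ _ fun x => ?_]
  rw [Equiv.coe_addRight, add_add_sub_cancel]

end BinCorr

lemma ZMod.eq_zero_or_eq_one (x : ZMod 2) : x = 0 ∨ x = 1 := by revert x; decide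

lemma I_pow_val_add (x y : ZMod 4) : I ^ (x + y).val = I ^ x.val * I ^ y.val := by
  rw [ZMod.val_add, ← pow_eq_pow_mod _ I_pow_four, pow_add]

lemma I_pow_val_sub (x y : ZMod 4) : I ^ (x - y).val = I ^ x.val * (I ^ y.val)⁻¹ := by
  rw [eq_mul_inv_iff_mul_eq₀ (pow_ne_zero _ I_ne_zero), ← I_pow_val_add, sub_add_cancel]

lemma I_pow_val_grayInv (a b : ZMod 2) :
    I ^ (grayInv a b).val = ((1 + I) * (-1) ^ a.val + (1 - I) * (-1) ^ b.val) / 2 := by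
  obtain rfl | rfl := ZMod.eq_zero_or_eq_one a <;> obtain rfl | rfl := ZMod.eq_zero_or_eq_one b <;>
    simp [grayInv, ZMod.val_ofNat, ZMod.val_one, show (1 : ZMod 4).val = 1 from rfl] <;> ring

lemma inv_I_pow_val_grayInv (a b : ZMod 2) :
    (I ^ (grayInv a b).val)⁻¹ = ((1 - I) * (-1) ^ a.val + (1 + I) * (-1) ^ b.val) / 2 := by
  obtain rfl | rfl := ZMod.eq_zero_or_eq_one a <;> obtain rfl | rfl := ZMod.eq_zero_or_eq_one b <;>
    simp [grayInv, ZMod.val_ofNat, ZMod.val_one, show (1 : ZMod 4).val = 1 from rfl] <;> ring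

lemma I_pow_val_grayInv_sub (a b c d : ZMod 2) :
    I ^ (grayInv a b - grayInv c d).val =
      ((-1) ^ (a + c).val + (-1) ^ (b + d).val) / 2 +
        ((-1) ^ (a + d).val - (-1) ^ (b + c).val) * I / 2 := by
  rw [I_pow_val_sub, I_pow_val_grayInv, inv_I_pow_val_grayInv, neg_one_pow_val_add,
    neg_one_pow_val_add, neg_one_pow_val_add, neg_one_pow_val_add]
  linear_combination ((-1) ^ a.val * (-1) ^ d.val + (-1) ^ b.val * (-1) ^ c.val
    - (-1) ^ a.val * (-1) ^ c.val - (-1) ^ b.val * (-1) ^ d.val : ℂ) / 4 * I_sq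

lemma quadCorr_grayInv (N : ℕ) (a b c d : ZMod N → ZMod 2) (τ : ZMod N) :
    quadCorr N (fun i => grayInv (a i) (b i)) (fun i => grayInv (c i) (d i)) τ =
      ((binCorr N a c τ + binCorr N b d τ : ℤ) : ℂ) / 2 +
        ((binCorr N a d τ - binCorr N b c τ : ℤ) : ℂ) * I / 2 := by
  simp only [quadCorr, binCorr, I_pow_val_grayInv_sub]
  push_cast
  simp only [sum_add_distrib, sum_sub_distrib, ← sum_div, ← sum_mul]

section Interleave

variable {H n : ℕ} [NeZero n] (a b : ZMod n → ZMod H)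

lemma val_natCast_two_mul_add {r : ℕ} (hr : r < 2) (i : ℕ) :
    ((2 * i + r : ℕ) : ZMod (2 * n)).val = 2 * (i % n) + r := by
  have hi : i % n < n := Nat.mod_lt i (NeZero.pos n)
  rw [ZMod.val_natCast, ← Nat.mod_add_div i n, mul_add, add_right_comm, ← mul_assoc,
    Nat.add_mul_mod_self_left, Nat.mod_eq_of_lt (by omega), Nat.add_mul_mod_self_left,
    Nat.mod_eq_of_lt hi]

lemma interleaveSeq_two_mul (i : ℕ) :
    interleaveSeq n a b ((2 * i : ℕ) : ZMod (2 * n)) = a i := by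
  have h := val_natCast_two_mul_add (n := n) (r := 0) (by norm_num) i
  simp only [add_zero] at h
  rw [interleaveSeq, h, if_pos (by omega), show 2 * (i % n) / 2 = i % n by omega, ZMod.natCast_mod]

lemma interleaveSeq_two_mul_add_one (i : ℕ) :
    interleaveSeq n a b ((2 * i + 1 : ℕ) : ZMod (2 * n)) = b i := by
  have h := val_natCast_two_mul_add (n := n) (r := 1) (by norm_num) i
  rw [interleaveSeq, h, if_neg (by omega), show (2 * (i % n) + 1) / 2 = i % n by omega,
    ZMod.natCast_mod]

lemma quadCorr_interleaveSeq_odd (p q : ZMod n → ZMod 4) (τ : ℕ) :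
    quadCorr (2 * n) (interleaveSeq n p q) (interleaveSeq n p q) ((2 * τ + 1 : ℕ)) =
      quadCorr n p q τ + quadCorr n q p ((τ + 1 : ℕ)) := by
  rw [quadCorr, sum_range_two_mul, sum_add_distrib]
  congr 1 <;> refine sum_congr rfl fun i _ => ?_
  · rw [← Nat.cast_add, show 2 * i + (2 * τ + 1) = 2 * (i + τ) + 1 by ring,
      interleaveSeq_two_mul, interleaveSeq_two_mul_add_one, Nat.cast_add]
  · rw [← Nat.cast_add, show 2 * i + 1 + (2 * τ + 1) = 2 * (i + (τ + 1)) by ring,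
      interleaveSeq_two_mul, interleaveSeq_two_mul_add_one, Nat.cast_add]

end Interleave

lemma constructionI_eq_interleaveSeq (n : ℕ) (a0 a1 a2 a3 : ZMod n → ZMod 2) (e0 e1 e2 : ZMod 2) :
    constructionI n a0 a1 a2 a3 e0 e1 e2 =
      interleaveSeq n (fun i => grayInv (a0 i) (e1 + a2 i))
        (fun i => grayInv (e0 + a1 (i + ((n + 1) / 2 : ℕ))) (e2 + a3 (i + ((n + 1) / 2 : ℕ)))) := by
  funext k
  simp only [constructionI, interleaveSeq]
  split_ifs <;> rfl

lemma natCast_half_succ_add_self {n : ℕ} (hn : Odd n) :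
    (((n + 1) / 2 : ℕ) : ZMod n) + (((n + 1) / 2 : ℕ) : ZMod n) = 1 := by
  obtain ⟨k, rfl⟩ := hn
  rw [← Nat.cast_add, show (2 * k + 1 + 1) / 2 + (2 * k + 1 + 1) / 2 = (2 * k + 1) + 1 by omega,
    Nat.cast_add, ZMod.natCast_self, zero_add, Nat.cast_one]

lemma neg_one_pow_val_mul_self {R : Type*} [Monoid R] [HasDistribNeg R] (e : ZMod 2) :
    (-1 : R) ^ e.val * (-1) ^ e.val = 1 := by
  rw [← pow_add, ← two_mul, pow_mul, neg_one_sq, one_pow]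

theorem stmt5_general (n : ℕ) (hn : Odd n) (a0 a1 a2 a3 : ZMod n → ZMod 2) (e0 e1 e2 : ZMod 2)
    (u : ZMod (2 * n) → ZMod 4) (hu : u = constructionI n a0 a1 a2 a3 e0 e1 e2)
    (τ0 : ℕ) (τ2 : ZMod n)
    (hτ2 : τ2 = (τ0 : ZMod n) + (((n + 1) / 2 : ℕ) : ZMod n)) :
    quadCorr (2 * n) u u ((2 * τ0 + 1 : ℕ) : ZMod (2 * n)) =
      (-1 : ℂ) ^ e0.val *
          (((binCorr n a0 a1 τ2 + binCorr n a1 a0 τ2 : ℤ) : ℂ) +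
            (-1 : ℂ) ^ (e0 + e1 + e2).val *
              ((binCorr n a2 a3 τ2 + binCorr n a3 a2 τ2 : ℤ) : ℂ)) / 2 +
        (-1 : ℂ) ^ e2.val *
          (((binCorr n a0 a3 τ2 - binCorr n a3 a0 τ2 : ℤ) : ℂ) +
            (-1 : ℂ) ^ (e0 + e1 + e2).val *
              ((binCorr n a1 a2 τ2 - binCorr n a2 a1 τ2 : ℤ) : ℂ)) *
          Complex.I / 2 := by
  have : NeZero n := ⟨hn.pos.ne'⟩
  have hτ2' : ((τ0 + 1 : ℕ) : ZMod n) - (((n + 1) / 2 : ℕ) : ZMod n) = τ2 := by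
    rw [hτ2, Nat.cast_add, Nat.cast_one, ← natCast_half_succ_add_self hn]
    ring
  rw [hu, constructionI_eq_interleaveSeq, quadCorr_interleaveSeq_odd, quadCorr_grayInv,
    quadCorr_grayInv]
  simp only [binCorr_const_add_left, binCorr_const_add_right, binCorr_shift_left,
    binCorr_shift_right, ← hτ2, hτ2']
  push_cast
  rw [neg_one_pow_val_add, neg_one_pow_val_add]
  linear_combination
    -((-1) ^ e1.val * (-1) ^ e2.val * ((binCorr n a2 a3 τ2 : ℂ) + binCorr n a3 a2 τ2)) / 2 *
        neg_one_pow_val_mul_self (R := ℂ) e0 -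
      (I * (-1) ^ e0.val * (-1) ^ e1.val * ((binCorr n a1 a2 τ2 : ℂ) - binCorr n a2 a1 τ2)) / 2 *
        neg_one_pow_val_mul_self (R := ℂ) e2

theorem stmt5 (n : ℕ) (hn : Odd n) (a0 a1 a2 a3 : ZMod n → ZMod 2) (e0 e1 e2 : ZMod 2)
    (u : ZMod (2 * n) → ZMod 4) (hu : u = constructionI n a0 a1 a2 a3 e0 e1 e2)
    (τ0 : ℕ) (hτ0 : τ0 < n) (τ2 : ZMod n)
    (hτ2 : τ2 = (τ0 : ZMod n) + (((n + 1) / 2 : ℕ) : ZMod n)) :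
    quadCorr (2 * n) u u ((2 * τ0 + 1 : ℕ) : ZMod (2 * n)) =
      (-1 : ℂ) ^ e0.val *
          (((binCorr n a0 a1 τ2 + binCorr n a1 a0 τ2 : ℤ) : ℂ) +
            (-1 : ℂ) ^ (e0 + e1 + e2).val *
              ((binCorr n a2 a3 τ2 + binCorr n a3 a2 τ2 : ℤ) : ℂ)) / 2 +
        (-1 : ℂ) ^ e2.val *
          (((binCorr n a0 a3 τ2 - binCorr n a3 a0 τ2 : ℤ) : ℂ) +
            (-1 : ℂ) ^ (e0 + e1 + e2).val *
              ((binCorr n a1 a2 τ2 - binCorr n a2 a1 τ2 : ℤ) : ℂ)) *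
          Complex.I / 2 :=
  stmt5_general n hn a0 a1 a2 a3 e0 e1 e2 u hu τ0 τ2 hτ2
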